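/- arXiv:1910.08997 — 7 statements merged into one kernel-verified Lean document; each statement's English description precedes it below -/
import Mathlib

section
/- Fix an integer m ≥ 1, a probability measure G on (0,∞), and an integer y with 1 ≤ y ≤ m, and assume ∫ θ^{y+1}/(1+θ)^m dG(θ) < ∞ (this holds automatically when y < m). Then the function δ ↦ ∫ θ^{−1} (θ − δ)² C(m,y) θ^y/(1+θ)^m dG(θ) on ℝ attains its minimum at the unique point δ*(y) = [y/(m−y+1)] · p(y)/p(y−1). -/
/-!
On `(0, ∞)` the loss integrand is `(θ - δ)² w(θ)` with the weight
`w(θ) = C(m,y) θ^(y-1) / (1+θ)^m`, so the posterior risk is a weighted least-squares criterion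
in `δ`: it equals its value at the weighted mean `c = ∫ θ w / ∫ w` plus `(∫ w) (δ - c)²`, and
`∫ w > 0`. The identity `y C(m,y) = (m-y+1) C(m,y-1)` turns `c` into `δ*(y)`. Integrability of
all the moments `θ^k / (1+θ)^m`, `k ≤ y + 1`, follows from the assumed one because
`θ^k ≤ 1 + θ^(y+1)` for `θ ≥ 0`.
-/

open MeasureTheory

section WeightedLeastSquares

variable {μ : Measure ℝ} {f : ℝ → ℝ}

theorem integral_sub_sq_mul (hf : Integrable f μ) (hxf : Integrable (fun x => x * f x) μ)
    (hx2f : Integrable (fun x => x ^ 2 * f x) μ) (δ : ℝ) :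
    ∫ x, (x - δ) ^ 2 * f x ∂μ
      = ∫ x, x ^ 2 * f x ∂μ - 2 * δ * ∫ x, x * f x ∂μ + δ ^ 2 * ∫ x, f x ∂μ := by
  have hexpand : (fun x => (x - δ) ^ 2 * f x)
      = fun x => x ^ 2 * f x - 2 * δ * (x * f x) + δ ^ 2 * f x := by
    funext x; ring
  have hsub : Integrable (fun x => x ^ 2 * f x - 2 * δ * (x * f x)) μ :=
    hx2f.sub (hxf.const_mul _)
  rw [hexpand, integral_add hsub (hf.const_mul _), integral_sub hx2f (hxf.const_mul _),
    integral_const_mul, integral_const_mul]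

theorem integral_sub_sq_mul_eq_add (hf : Integrable f μ) (hxf : Integrable (fun x => x * f x) μ)
    (hx2f : Integrable (fun x => x ^ 2 * f x) μ) {c : ℝ}
    (hc : c * ∫ x, f x ∂μ = ∫ x, x * f x ∂μ) (δ : ℝ) :
    ∫ x, (x - δ) ^ 2 * f x ∂μ = ∫ x, (x - c) ^ 2 * f x ∂μ + (∫ x, f x ∂μ) * (δ - c) ^ 2 := by
  rw [integral_sub_sq_mul hf hxf hx2f, integral_sub_sq_mul hf hxf hx2f]
  linear_combination 2 * (δ - c) * hc

theorem integral_sub_sq_mul_unique_minimizer (hf : Integrable f μ)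
    (hxf : Integrable (fun x => x * f x) μ) (hx2f : Integrable (fun x => x ^ 2 * f x) μ)
    (hpos : 0 < ∫ x, f x ∂μ) {c : ℝ} (hc : c * ∫ x, f x ∂μ = ∫ x, x * f x ∂μ) :
    (∀ δ : ℝ, ∫ x, (x - c) ^ 2 * f x ∂μ ≤ ∫ x, (x - δ) ^ 2 * f x ∂μ) ∧
    (∀ δ : ℝ, ∫ x, (x - δ) ^ 2 * f x ∂μ = ∫ x, (x - c) ^ 2 * f x ∂μ → δ = c) := by
  have hsplit := integral_sub_sq_mul_eq_add hf hxf hx2f hc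
  refine ⟨fun δ => ?_, fun δ hδ => ?_⟩
  · rw [hsplit δ]
    have := mul_nonneg hpos.le (sq_nonneg (δ - c))
    linarith
  · rw [hsplit δ, add_eq_left, mul_eq_zero, pow_eq_zero_iff two_ne_zero, sub_eq_zero] at hδ
    exact hδ.resolve_left hpos.ne'

end WeightedLeastSquares

theorem integral_pos_of_ae_pos {α : Type*} [MeasurableSpace α] {μ : Measure α} [NeZero μ]
    {f : α → ℝ} (hf : ∀ᵐ x ∂μ, 0 < f x) (hfi : Integrable f μ) : 0 < ∫ x, f x ∂μ := by
  rw [integral_pos_iff_support_of_nonneg_ae (hf.mono fun _ hx => hx.le) hfi, pos_iff_ne_zero]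
  intro hnull
  have hfalse : ∀ᵐ x ∂μ, False := by
    filter_upwards [hf, measure_eq_zero_iff_ae_notMem.1 hnull] with x hpos hzero
    exact hzero hpos.ne'
  exact NeZero.ne μ (ae_eq_bot.1 (Filter.eventually_false_iff_eq_bot.1 hfalse))

theorem Nat.cast_choose_succ_right_eq {R : Type*} [CommRing R] (m n : ℕ) :
    (m.choose (n + 1) : R) * (n + 1) = m.choose n * (m - n) := by
  rcases le_or_gt n m with hnm | hmn
  · have h := congrArg (Nat.cast : ℕ → R) (Nat.choose_succ_right_eq m n)
    push_cast [Nat.cast_sub hnm] at h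
    exact h
  · simp [Nat.choose_eq_zero_of_lt hmn, Nat.choose_eq_zero_of_lt (hmn.trans (Nat.lt_succ_self n))]

theorem pow_le_one_add_pow {x : ℝ} (hx : 0 ≤ x) {j k : ℕ} (hjk : j ≤ k) : x ^ j ≤ 1 + x ^ k := by
  rcases le_total x 1 with hx1 | hx1
  · linarith [pow_le_one₀ hx hx1 (n := j), pow_nonneg hx k]
  · linarith [pow_le_pow_right₀ hx1 hjk]

theorem MeasureTheory.Integrable.pow_div_one_add_pow_of_le {μ : Measure ℝ} [IsFiniteMeasure μ]
    {m j k : ℕ}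
    (h0 : ∀ᵐ x ∂μ, 0 ≤ x) (hjk : j ≤ k) (hk : Integrable (fun x => x ^ k / (1 + x) ^ m) μ) :
    Integrable (fun x => x ^ j / (1 + x) ^ m) μ := by
  refine ((integrable_const 1).add hk).mono' (by fun_prop : Measurable _).aestronglyMeasurable ?_
  filter_upwards [h0] with x hx
  have h1 : 1 ≤ (1 + x) ^ m := one_le_pow₀ (by linarith)
  rw [Real.norm_of_nonneg (by positivity)]
  calc x ^ j / (1 + x) ^ m ≤ (1 + x ^ k) / (1 + x) ^ m := by
        gcongr; exact pow_le_one_add_pow hx hjk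
    _ = 1 / (1 + x) ^ m + x ^ k / (1 + x) ^ m := add_div _ _ _
    _ ≤ 1 + x ^ k / (1 + x) ^ m := by gcongr; exact div_le_one_of_le₀ h1 (by positivity)

theorem succ_div_mul_choose_succ_div_choose_eq {m n : ℕ} (hnm : n + 1 ≤ m) {B D : ℝ} (hD : D ≠ 0) :
    ((n + 1 : ℕ) : ℝ) / ((m : ℝ) - (n + 1 : ℕ) + 1) * (m.choose (n + 1) * B / (m.choose n * D))
      = B / D := by
  have hmn : (0 : ℝ) < m - n := by
    rw [sub_pos]; exact_mod_cast hnm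
  have hchoose : (0 : ℝ) < m.choose n := by exact_mod_cast Nat.choose_pos (by omega)
  rw [div_mul_div_comm, div_eq_div_iff (mul_ne_zero (by push_cast; linarith)
    (mul_ne_zero hchoose.ne' hD)) hD]
  push_cast
  linear_combination B * D * Nat.cast_choose_succ_right_eq (R := ℝ) m n

theorem bayes_rule_binomial_odds_scaled_loss_general
    (m : ℕ)
    (G : Measure ℝ) [IsProbabilityMeasure G] (hG : G (Set.Iic 0) = 0)
    (y : ℕ) (hy1 : 1 ≤ y) (hym : y ≤ m)
    (hfin : ∫⁻ θ, ENNReal.ofReal (θ ^ (y + 1) / (1 + θ) ^ m) ∂G < ⊤)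
    (p : ℕ → ℝ)
    (hp : ∀ z : ℕ, p z = ∫ θ, (m.choose z : ℝ) * θ ^ z / (1 + θ) ^ m ∂G)
    (δstar : ℝ)
    (hδ : δstar = (y : ℝ) / ((m : ℝ) - (y : ℝ) + 1) * (p y / p (y - 1))) :
    (∀ δ : ℝ,
      (∫ θ, θ⁻¹ * (θ - δstar) ^ 2 * ((m.choose y : ℝ) * θ ^ y / (1 + θ) ^ m) ∂G)
        ≤ ∫ θ, θ⁻¹ * (θ - δ) ^ 2 * ((m.choose y : ℝ) * θ ^ y / (1 + θ) ^ m) ∂G) ∧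
    (∀ δ : ℝ,
      (∫ θ, θ⁻¹ * (θ - δ) ^ 2 * ((m.choose y : ℝ) * θ ^ y / (1 + θ) ^ m) ∂G)
        = (∫ θ, θ⁻¹ * (θ - δstar) ^ 2 * ((m.choose y : ℝ) * θ ^ y / (1 + θ) ^ m) ∂G)
      → δ = δstar) := by
  obtain ⟨n, rfl⟩ : ∃ n, y = n + 1 := ⟨y - 1, by omega⟩
  have hpos : ∀ᵐ θ ∂G, 0 < θ := mem_ae_iff.2 (show G (Set.Ioi 0)ᶜ = 0 by rwa [Set.compl_Ioi])
  set C : ℝ := (m.choose (n + 1) : ℝ)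
  have hint_top : Integrable (fun θ => θ ^ (n + 2) / (1 + θ) ^ m) G :=
    (lintegral_ofReal_ne_top_iff_integrable (by fun_prop : Measurable _).aestronglyMeasurable
      (hpos.mono fun θ hθ => by positivity)).1 hfin.ne
  have hint : ∀ k ≤ n + 2, Integrable (fun θ => θ ^ k / (1 + θ) ^ m) G := fun k hk =>
    hint_top.pow_div_one_add_pow_of_le (hpos.mono fun _ hθ => hθ.le) hk
  have hloss : ∀ δ : ℝ, ∫ θ, θ⁻¹ * (θ - δ) ^ 2 * (C * θ ^ (n + 1) / (1 + θ) ^ m) ∂G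
      = ∫ θ, (θ - δ) ^ 2 * (C * (θ ^ n / (1 + θ) ^ m)) ∂G := fun δ =>
    integral_congr_ae (hpos.mono fun θ hθ => by field_simp; ring)
  have hweight : ∀ k ≤ 2, Integrable (fun θ => θ ^ k * (C * (θ ^ n / (1 + θ) ^ m))) G :=
    fun k hk => ((hint (n + k) (by omega)).const_mul C).congr (ae_of_all _ fun θ => by ring)
  have hfirst : ∫ θ, θ * (C * (θ ^ n / (1 + θ) ^ m)) ∂G
      = C * ∫ θ, θ ^ (n + 1) / (1 + θ) ^ m ∂G := by
    rw [← integral_const_mul]; congr 1; funext θ; ring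
  have hmarginal : ∀ z, p z = m.choose z * ∫ θ, θ ^ z / (1 + θ) ^ m ∂G := fun z => by
    rw [hp, ← integral_const_mul]; simp_rw [mul_div_assoc]
  have hD : 0 < ∫ θ, θ ^ n / (1 + θ) ^ m ∂G :=
    integral_pos_of_ae_pos (hpos.mono fun θ hθ => by positivity) (hint n (by omega))
  rw [hmarginal, hmarginal, Nat.add_sub_cancel, succ_div_mul_choose_succ_div_choose_eq hym hD.ne'] at hδ
  simp only [hloss]
  refine integral_sub_sq_mul_unique_minimizer (by simpa using hweight 0 (by norm_num))
    (by simpa using hweight 1 (by norm_num)) (hweight 2 le_rfl) ?_ ?_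
  · rw [integral_const_mul]
    exact mul_pos (Nat.cast_pos.2 (Nat.choose_pos hym)) hD
  · rw [hfirst, integral_const_mul, hδ]
    field_simp

/-- Bayes estimator of the Binomial odds `θ = q/(1-q)` under the scaled squared error loss
`ℓ⁽¹⁾(θ,δ) = θ⁻¹(θ-δ)²`: given `Y = y` with `1 ≤ y ≤ m` and the integrability condition
`∫ θ^{y+1}/(1+θ)^m dG < ∞`, the posterior expected loss `δ ↦ ∫ θ⁻¹(θ-δ)² p(y|θ) dG(θ)`
attains its minimum at the unique point `δ*(y) = [y/(m-y+1)] p(y)/p(y-1)`. -/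
theorem bayes_rule_binomial_odds_scaled_loss
    (m : ℕ) (hm : 1 ≤ m)
    (G : Measure ℝ) [IsProbabilityMeasure G] (hG : G (Set.Iic 0) = 0)
    (y : ℕ) (hy1 : 1 ≤ y) (hym : y ≤ m)
    (hfin : ∫⁻ θ, ENNReal.ofReal (θ ^ (y + 1) / (1 + θ) ^ m) ∂G < ⊤)
    (p : ℕ → ℝ)
    (hp : ∀ z : ℕ, p z = ∫ θ, (m.choose z : ℝ) * θ ^ z / (1 + θ) ^ m ∂G)
    (δstar : ℝ)
    (hδ : δstar = (y : ℝ) / ((m : ℝ) - (y : ℝ) + 1) * (p y / p (y - 1))) :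
    (∀ δ : ℝ,
      (∫ θ, θ⁻¹ * (θ - δstar) ^ 2 * ((m.choose y : ℝ) * θ ^ y / (1 + θ) ^ m) ∂G)
        ≤ ∫ θ, θ⁻¹ * (θ - δ) ^ 2 * ((m.choose y : ℝ) * θ ^ y / (1 + θ) ^ m) ∂G) ∧
    (∀ δ : ℝ,
      (∫ θ, θ⁻¹ * (θ - δ) ^ 2 * ((m.choose y : ℝ) * θ ^ y / (1 + θ) ^ m) ∂G)
        = (∫ θ, θ⁻¹ * (θ - δstar) ^ 2 * ((m.choose y : ℝ) * θ ^ y / (1 + θ) ^ m) ∂G)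
      → δ = δstar) :=
  bayes_rule_binomial_odds_scaled_loss_general m G hG y hy1 hym hfin p hp δstar hδ
end

section
/- Let p be a pmf on ℕ with p(y) > 0 for all y, define h₀(0) = 1 and h₀(y) = 1 − p(y−1)/p(y) for y ≥ 1, and let h̃ : ℕ → ℝ be bounded. Fix λ > 0 and define κ_λ(u,v) = h̃(u)h̃(v)K_λ(u,v) + h̃(u)Δ_v K_λ(u,v) + h̃(v)Δ_u K_λ(u,v) + Δ_{u,v}K_λ(u,v). Then both double series below converge absolutely and Σ_{u=0}^∞ Σ_{v=0}^∞ p(u)p(v)(h̃(u)−h₀(u)) K_λ(u,v) (h̃(v)−h₀(v)) = Σ_{u=0}^∞ Σ_{v=0}^∞ p(u)p(v) κ_λ(u,v). -/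
/-!
Write `d = p (h̃ - h₀)` and `T f (v) = h̃(v) f(v) + (f(v+1) - f(v))` for the Stein operator.
Since `p(y+1) h₀(y+1) = p(y+1) - p(y)` and `p(0) h₀(0) = p(0)`, summation by parts gives
`∑ p h₀ f = ∑ p (f - f(· + 1))` for bounded `f`, i.e. `∑ d f = ∑ p (T f)`. Applying this
first in `v` and then in `u` to the bounded kernel `K` turns the quadratic form into
`∑ p(u) p(v) T_u T_v K(u,v)` (`T_u` commutes with `∑_v` because `p` is summable and
`T_v K` is bounded), and `T_u T_v K = κ`.
-/

theorem Summable.mul_of_abs_le {ι : Type*} {p f : ι → ℝ} {M : ℝ} (hp : Summable p)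
    (hf : ∀ v, |f v| ≤ M) :
    Summable fun v => p v * f v :=
  .of_norm_bounded (hp.abs.mul_right M) fun v => by
    rw [Real.norm_eq_abs, abs_mul]
    exact mul_le_mul_of_nonneg_left (hf v) (abs_nonneg _)

theorem abs_tsum_mul_le {ι : Type*} {p f : ι → ℝ} {M : ℝ} (hp : Summable p)
    (hf : ∀ v, |f v| ≤ M) :
    |∑' v, p v * f v| ≤ (∑' v, |p v|) * M :=
  tsum_of_norm_bounded (hp.abs.hasSum.mul_right M) fun v => by
    rw [Real.norm_eq_abs, abs_mul]
    exact mul_le_mul_of_nonneg_left (hf v) (abs_nonneg _)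

theorem summable_of_succ_eq_sub {p w : ℕ → ℝ} (hp : Summable p)
    (hw : ∀ y, w (y + 1) = p (y + 1) - p y) : Summable w :=
  (summable_nat_add_iff 1).mp <| by
    simpa only [hw] using ((summable_nat_add_iff 1).mpr hp).sub hp

theorem tsum_mul_eq_tsum_mul_sub_succ {p f w : ℕ → ℝ} {M : ℝ} (hp : Summable p)
    (hf : ∀ v, |f v| ≤ M) (hw0 : w 0 = p 0) (hw : ∀ y, w (y + 1) = p (y + 1) - p y) :
    ∑' v, w v * f v = ∑' v, p v * (f v - f (v + 1)) := by
  have hpf := hp.mul_of_abs_le hf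
  have hpf_succ := hp.mul_of_abs_le (f := fun v => f (v + 1)) fun v => hf (v + 1)
  have hpf' := (summable_nat_add_iff 1).mpr hpf
  simp only [mul_sub]
  rw [Summable.tsum_sub hpf hpf_succ, hpf.tsum_eq_zero_add,
    ((summable_of_succ_eq_sub hp hw).mul_of_abs_le hf).tsum_eq_zero_add, hw0]
  simp only [hw, sub_mul]
  rw [Summable.tsum_sub hpf' hpf_succ]
  ring

def steinOp (htil f : ℕ → ℝ) (v : ℕ) : ℝ :=
  htil v * f v + (f (v + 1) - f v)

theorem abs_steinOp_le {htil f : ℕ → ℝ} {C M : ℝ} (hh : ∀ v, |htil v| ≤ C)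
    (hf : ∀ v, |f v| ≤ M) (v : ℕ) : |steinOp htil f v| ≤ (C + 2) * M := by
  calc |steinOp htil f v| ≤ |htil v| * |f v| + (|f (v + 1)| + |f v|) := by
        rw [steinOp, ← abs_mul]
        exact (abs_add_le _ _).trans (by gcongr; exact abs_sub _ _)
    _ ≤ C * M + (M + M) :=
        add_le_add (mul_le_mul (hh v) (hf v) (abs_nonneg _) ((abs_nonneg _).trans (hh 0)))
          (add_le_add (hf (v + 1)) (hf v))
    _ = (C + 2) * M := by ring

theorem tsum_mul_sub_mul_eq_tsum_steinOp {p h₀ htil f : ℕ → ℝ} {C M : ℝ} (hp : Summable p)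
    (hh₀0 : p 0 * h₀ 0 = p 0) (hh₀ : ∀ y, p (y + 1) * h₀ (y + 1) = p (y + 1) - p y)
    (hh : ∀ v, |htil v| ≤ C) (hf : ∀ v, |f v| ≤ M) :
    ∑' v, p v * (htil v - h₀ v) * f v = ∑' v, p v * steinOp htil f v := by
  have hhf : ∀ v, |htil v * f v| ≤ C * M := fun v => by
    rw [abs_mul]
    exact mul_le_mul (hh v) (hf v) (abs_nonneg _) ((abs_nonneg _).trans (hh 0))
  have hdiff : ∀ v, |f (v + 1) - f v| ≤ M + M := fun v =>
    (abs_sub _ _).trans (add_le_add (hf (v + 1)) (hf v))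
  have hw := summable_of_succ_eq_sub hp hh₀ (w := fun v => p v * h₀ v)
  calc ∑' v, p v * (htil v - h₀ v) * f v
      = ∑' v, p v * (htil v * f v) - ∑' v, p v * h₀ v * f v := by
        rw [← Summable.tsum_sub (hp.mul_of_abs_le hhf) (hw.mul_of_abs_le hf)]
        congr 1; funext v; ring
    _ = ∑' v, p v * (htil v * f v) + ∑' v, p v * (f (v + 1) - f v) := by
        rw [tsum_mul_eq_tsum_mul_sub_succ hp hf hh₀0 hh₀, sub_eq_add_neg, ← tsum_neg]
        simp only [← mul_neg, neg_sub]
    _ = ∑' v, p v * steinOp htil f v := by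
        rw [← Summable.tsum_add (hp.mul_of_abs_le hhf) (hp.mul_of_abs_le hdiff)]
        simp only [steinOp, mul_add]

theorem steinOp_tsum_mul {p htil : ℕ → ℝ} {G : ℕ → ℕ → ℝ}
    (hG : ∀ u, Summable fun v => p v * G u v) (u : ℕ) :
    steinOp htil (fun u' => ∑' v, p v * G u' v) u
      = ∑' v, p v * steinOp htil (fun u' => G u' v) u := by
  simp only [steinOp]
  rw [← tsum_mul_left, ← Summable.tsum_sub (hG (u + 1)) (hG u),
    ← Summable.tsum_add ((hG u).mul_left _) ((hG (u + 1)).sub (hG u))]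
  congr 1; funext v; ring

theorem abs_exp_neg_sq_div_le_one {lam : ℝ} (hlam : 0 < lam) (x : ℝ) :
    |Real.exp (-x ^ 2 / (2 * lam))| ≤ 1 := by
  rw [abs_of_pos (Real.exp_pos _), Real.exp_le_one_iff]
  exact div_nonpos_of_nonpos_of_nonneg (neg_nonpos.mpr (sq_nonneg x)) (by positivity)

theorem summable_abs_mul_mul_of_abs_le {α β : Type*} {a : α → ℝ} {b : β → ℝ}
    {k : α → β → ℝ} {M : ℝ} (ha : Summable a) (hb : Summable b) (hk : ∀ u v, |k u v| ≤ M) :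
    Summable fun uv : α × β => |a uv.1 * b uv.2 * k uv.1 uv.2| :=
  (summable_mul_of_summable_norm (f := a) (g := b) ha.norm hb.norm).norm.mul_of_abs_le
    (f := fun uv : α × β => k uv.1 uv.2) (fun uv => hk uv.1 uv.2) |>.abs.congr fun uv => by
    simp [abs_mul]

/-- RKHS representation of the kernelized Stein discrepancy under the scaled loss (k = 1):
the Stein-discrepancy quadratic form equals the double expectation of the Stein kernel
`κ_λ`, both double series converging absolutely. -/
theorem ksd_rkhs_representation_scaled_loss
    (p : ℕ → ℝ) (hp : ∀ y, 0 < p y) (hp1 : ∑' y : ℕ, p y = 1)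
    (h₀ : ℕ → ℝ) (hh₀0 : h₀ 0 = 1) (hh₀ : ∀ y : ℕ, h₀ (y + 1) = 1 - p y / p (y + 1))
    (htil : ℕ → ℝ) (C : ℝ) (hbd : ∀ y, |htil y| ≤ C)
    (lam : ℝ) (hlam : 0 < lam)
    (K : ℕ → ℕ → ℝ)
    (hK : ∀ u v : ℕ, K u v = Real.exp (-((u : ℝ) - (v : ℝ)) ^ 2 / (2 * lam)))
    (κ : ℕ → ℕ → ℝ)
    (hκ : ∀ u v : ℕ, κ u v =
        htil u * htil v * K u v
        + htil u * (K u (v + 1) - K u v)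
        + htil v * (K (u + 1) v - K u v)
        + (K (u + 1) (v + 1) - K (u + 1) v - K u (v + 1) + K u v)) :
    (Summable fun uv : ℕ × ℕ =>
        |p uv.1 * p uv.2 * (htil uv.1 - h₀ uv.1) * K uv.1 uv.2 * (htil uv.2 - h₀ uv.2)|) ∧
    (Summable fun uv : ℕ × ℕ => |p uv.1 * p uv.2 * κ uv.1 uv.2|) ∧
    ∑' u : ℕ, ∑' v : ℕ, p u * p v * (htil u - h₀ u) * K u v * (htil v - h₀ v)
      = ∑' u : ℕ, ∑' v : ℕ, p u * p v * κ u v := by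
  have hps : Summable p := by
    by_contra h
    simp [tsum_eq_zero_of_not_summable h] at hp1
  have hK1 : ∀ u v, |K u v| ≤ 1 := fun u v => hK u v ▸ abs_exp_neg_sq_div_le_one hlam _
  have hw0 : p 0 * h₀ 0 = p 0 := by rw [hh₀0, mul_one]
  have hw : ∀ y, p (y + 1) * h₀ (y + 1) = p (y + 1) - p y := fun y => by
    rw [hh₀, mul_sub, mul_one, mul_div_cancel₀ _ (hp (y + 1)).ne']
  have hd : Summable fun u => p u * (htil u - h₀ u) :=
    ((hps.mul_of_abs_le hbd).sub (summable_of_succ_eq_sub hps hw)).congr fun v =>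
      (mul_sub _ _ _).symm
  set g : ℕ → ℕ → ℝ := fun u => steinOp htil (K u) with hg_def
  have hg : ∀ u v, |g u v| ≤ (C + 2) * 1 := fun u => abs_steinOp_le hbd (hK1 u)
  have hκg : ∀ u v, κ u v = steinOp htil (fun u' => g u' v) u := fun u v => by
    simp only [hκ, hg_def, steinOp]; ring
  have hκ1 : ∀ u v, |κ u v| ≤ (C + 2) * ((C + 2) * 1) := fun u v => by
    rw [hκg]; exact abs_steinOp_le hbd (fun u' => hg u' v) u
  refine ⟨(summable_abs_mul_mul_of_abs_le hd hd hK1).congr fun uv => by congr 1; ring,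
    summable_abs_mul_mul_of_abs_le hps hps hκ1, ?_⟩
  calc ∑' u, ∑' v, p u * p v * (htil u - h₀ u) * K u v * (htil v - h₀ v)
      = ∑' u, p u * (htil u - h₀ u) * ∑' v, p v * g u v := by
        congr 1; funext u
        rw [← tsum_mul_sub_mul_eq_tsum_steinOp hps hw0 hw hbd (hK1 u), ← tsum_mul_left]
        congr 1; funext v; ring
    _ = ∑' u, p u * steinOp htil (fun u' => ∑' v, p v * g u' v) u :=
        tsum_mul_sub_mul_eq_tsum_steinOp hps hw0 hw hbd fun u => abs_tsum_mul_le hps (hg u)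
    _ = ∑' u, ∑' v, p u * p v * κ u v := by
        congr 1; funext u
        rw [steinOp_tsum_mul (fun u => hps.mul_of_abs_le (hg u)), ← tsum_mul_left]
        congr 1; funext v; rw [hκg]; ring
end

section
/- Let m ≥ 1 be an integer and q ∈ [0,1). Then Σ_{y=0}^m C(m,y) q^y (1−q)^{m−y} · y/(m−y+1) = (q/(1−q)) · (1 − q^m). -/
/-! Since `C(m, y) · y = C(m, y - 1) · (m - y + 1)`, the weight `y / (m - y + 1)` turns the
`y`-th binomial term into `q / (1 - q)` times the `(y - 1)`-th one. The sum therefore becomes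
`q / (1 - q)` times the binomial mass of `{0, …, m - 1}`, which is `1 - q ^ m`. -/

open Finset

theorem Nat.cast_choose_succ_mul_div {K : Type*} [Field K] [CharZero K] {m i : ℕ} (h : i < m) :
    (m.choose (i + 1) : K) * (((i + 1 : ℕ) : K) / ((m : K) - ((i + 1 : ℕ) : K) + 1))
      = m.choose i := by
  have hcast : (m : K) - ((i + 1 : ℕ) : K) + 1 = ((m - i : ℕ) : K) := by
    push_cast [Nat.cast_sub h.le]; ring
  have hne : ((m - i : ℕ) : K) ≠ 0 := Nat.cast_ne_zero.mpr (by omega)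
  rw [hcast, ← mul_div_assoc, div_eq_iff hne]
  exact_mod_cast Nat.choose_succ_right_eq m i

theorem sum_range_choose_mul_pow_mul_one_sub_pow {R : Type*} [CommRing R] (q : R) (m : ℕ) :
    ∑ i ∈ range m, (m.choose i : R) * q ^ i * (1 - q) ^ (m - i) = 1 - q ^ m := by
  have htotal := add_pow q (1 - q) m
  rw [add_sub_cancel, one_pow, sum_range_succ, Nat.choose_self, Nat.sub_self] at htotal
  simp only [pow_zero, mul_one, Nat.cast_one] at htotal
  have hreorder : ∑ i ∈ range m, (m.choose i : R) * q ^ i * (1 - q) ^ (m - i)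
      = ∑ i ∈ range m, q ^ i * (1 - q) ^ (m - i) * m.choose i :=
    sum_congr rfl fun i _ => by ring
  linear_combination hreorder - htotal

theorem binomial_expectation_div_succ_complement_general (m : ℕ)
    (q : ℝ) (hq1 : q < 1) :
    ∑ y ∈ Finset.range (m + 1),
      (m.choose y : ℝ) * q ^ y * (1 - q) ^ (m - y) * ((y : ℝ) / ((m : ℝ) - y + 1))
      = q / (1 - q) * (1 - q ^ m) := by
  have hq : (1 : ℝ) - q ≠ 0 := by linarith
  rw [sum_range_succ', ← sum_range_choose_mul_pow_mul_one_sub_pow q m, mul_sum]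
  simp only [Nat.cast_zero, zero_div, mul_zero, add_zero]
  refine sum_congr rfl fun i hmem => ?_
  have hi : i < m := mem_range.mp hmem
  have hpow : (1 - q) ^ (m - i) = (1 - q) ^ (m - (i + 1)) * (1 - q) := by
    rw [← pow_succ]; congr 1; omega
  rw [hpow, ← Nat.cast_choose_succ_mul_div (K := ℝ) hi]
  field_simp
  ring

/-- Binomial first-moment identity behind `ARE^{(1,B)}`:
`E[Y/(m-Y+1)] = (q/(1-q)) (1 - q^m)` for `Y ~ Bin(m,q)`. -/
theorem binomial_expectation_div_succ_complement (m : ℕ) (hm : 1 ≤ m)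
    (q : ℝ) (hq0 : 0 ≤ q) (hq1 : q < 1) :
    ∑ y ∈ Finset.range (m + 1),
      (m.choose y : ℝ) * q ^ y * (1 - q) ^ (m - y) * ((y : ℝ) / ((m : ℝ) - y + 1))
      = q / (1 - q) * (1 - q ^ m) :=
  binomial_expectation_div_succ_complement_general m q hq1
end

section
/- Let m ≥ 1 be an integer and q ∈ [0,1). Then Σ_{y=0}^m C(m,y) q^y (1−q)^{m−y} · y(y−1)/((m−y+2)(m−y+1)) = (q/(1−q))² · (1 − m q^{m−1}(1−q) − q^m). -/
/-!
Since `C(m, k+2) (k+2)(k+1) = C(m, k) (m-k)(m-k-1)`, the summand at `y = k + 2` equals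
`θ² C(m,k) q^k (1-q)^{m-k}`, while the summands at `y = 0, 1` vanish. The sum is therefore `θ²`
times the binomial probability `P(Y ≤ m - 2) = 1 - P(Y = m - 1) - P(Y = m)`.
-/

open Finset

theorem Nat.choose_add_two_mul (n k : ℕ) :
    n.choose (k + 2) * ((k + 2) * (k + 1)) = n.choose k * ((n - k) * (n - k - 1)) := by
  have h₁ := Nat.choose_succ_right_eq n (k + 1)
  have h₂ := Nat.choose_succ_right_eq n k
  rw [show n - (k + 1) = n - k - 1 by omega] at h₁
  calc n.choose (k + 2) * ((k + 2) * (k + 1))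
      = n.choose (k + 1 + 1) * (k + 1 + 1) * (k + 1) := by ring
    _ = n.choose (k + 1) * (k + 1) * (n - k - 1) := by rw [h₁]; ring
    _ = n.choose k * ((n - k) * (n - k - 1)) := by rw [h₂]; ring

noncomputable def binomialWeight (m : ℕ) (q : ℝ) (y : ℕ) : ℝ :=
  m.choose y * q ^ y * (1 - q) ^ (m - y)

theorem sum_binomialWeight (m : ℕ) (q : ℝ) :
    ∑ y ∈ range (m + 1), binomialWeight m q y = 1 := by
  simpa [binomialWeight, mul_right_comm _ _ (m.choose _ : ℝ), mul_comm] using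
    (add_pow q (1 - q) m).symm

theorem sum_range_binomialWeight_succ (n : ℕ) (q : ℝ) :
    ∑ k ∈ range n, binomialWeight (n + 1) q k = 1 - (n + 1) * q ^ n * (1 - q) - q ^ (n + 1) := by
  have h := sum_binomialWeight (n + 1) q
  have hn : binomialWeight (n + 1) q n = (n + 1) * q ^ n * (1 - q) := by
    simp [binomialWeight, Nat.choose_succ_self_right, show n + 1 - n = 1 by omega]
  have hsucc : binomialWeight (n + 1) q (n + 1) = q ^ (n + 1) := by simp [binomialWeight]
  rw [sum_range_succ, sum_range_succ, hn, hsucc] at h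
  linarith

noncomputable def oddsSqEstimate (m y : ℕ) : ℝ :=
  y * (y - 1) / ((m - y + 2) * (m - y + 1))

@[simp] theorem oddsSqEstimate_zero (m : ℕ) : oddsSqEstimate m 0 = 0 := by
  simp [oddsSqEstimate]

@[simp] theorem oddsSqEstimate_one (m : ℕ) : oddsSqEstimate m 1 = 0 := by
  simp [oddsSqEstimate]

theorem binomialWeight_mul_oddsSqEstimate_add_two {m k : ℕ} (hk : k + 2 ≤ m) {q : ℝ}
    (hq : q ≠ 1) :
    binomialWeight m q (k + 2) * oddsSqEstimate m (k + 2)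
      = (q / (1 - q)) ^ 2 * binomialWeight m q k := by
  have hchoose : (m.choose (k + 2) : ℝ) * ((k + 2) * (k + 1))
      = m.choose k * (((m : ℝ) - k) * ((m : ℝ) - k - 1)) := by
    have := congrArg (Nat.cast : ℕ → ℝ) (Nat.choose_add_two_mul m k)
    push_cast [Nat.cast_sub (show k ≤ m by omega), Nat.cast_sub (show 1 ≤ m - k by omega)] at this
    exact this
  have hm : (k : ℝ) + 2 ≤ m := by exact_mod_cast hk
  have h₁ : (m : ℝ) - k ≠ 0 := by linarith
  have h₂ : (m : ℝ) - k - 1 ≠ 0 := by linarith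
  have hq' : 1 - q ≠ 0 := sub_ne_zero.mpr hq.symm
  rw [binomialWeight, binomialWeight, oddsSqEstimate, show m - k = m - (k + 2) + 2 by omega]
  rw [show (m : ℝ) - (k + 2 : ℕ) + 2 = m - k by push_cast; ring,
    show (m : ℝ) - (k + 2 : ℕ) + 1 = m - k - 1 by push_cast; ring]
  push_cast
  field_simp
  linear_combination q ^ (k + 2) * (1 - q) ^ (m - (k + 2)) * (1 - q) ^ 2 * hchoose

theorem binomial_expectation_factorial_ratio_general (m : ℕ)
    (q : ℝ) (hq1 : q < 1) :
    ∑ y ∈ Finset.range (m + 1),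
      (m.choose y : ℝ) * q ^ y * (1 - q) ^ (m - y) *
        ((y : ℝ) * ((y : ℝ) - 1) / ((((m : ℝ) - y + 2)) * ((m : ℝ) - y + 1)))
      = (q / (1 - q)) ^ 2 * (1 - (m : ℝ) * q ^ (m - 1) * (1 - q) - q ^ m) := by
  cases m with
  | zero => simp
  | succ n =>
    show ∑ y ∈ range (n + 2), binomialWeight (n + 1) q y * oddsSqEstimate (n + 1) y = _
    have hshift : ∑ y ∈ range (n + 2), binomialWeight (n + 1) q y * oddsSqEstimate (n + 1) y
        = (q / (1 - q)) ^ 2 * ∑ k ∈ range n, binomialWeight (n + 1) q k := by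
      rw [sum_range_succ', sum_range_succ', mul_sum]
      simp only [zero_add, oddsSqEstimate_zero, oddsSqEstimate_one, mul_zero, add_zero]
      exact sum_congr rfl fun k hk =>
        binomialWeight_mul_oddsSqEstimate_add_two (by simp at hk; omega) hq1.ne
    rw [hshift, sum_range_binomialWeight_succ]
    simp

/-- Binomial second-moment identity behind `ARE^{(0,B)}`:
`E[Y(Y-1)/((m-Y+2)(m-Y+1))] = (q/(1-q))² (1 - m q^{m-1}(1-q) - q^m)` for `Y ~ Bin(m,q)`. -/
theorem binomial_expectation_factorial_ratio (m : ℕ) (hm : 1 ≤ m)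
    (q : ℝ) (hq0 : 0 ≤ q) (hq1 : q < 1) :
    ∑ y ∈ Finset.range (m + 1),
      (m.choose y : ℝ) * q ^ y * (1 - q) ^ (m - y) *
        ((y : ℝ) * ((y : ℝ) - 1) / ((((m : ℝ) - y + 2)) * ((m : ℝ) - y + 1)))
      = (q / (1 - q)) ^ 2 * (1 - (m : ℝ) * q ^ (m - 1) * (1 - q) - q ^ m) :=
  binomial_expectation_factorial_ratio_general m q hq1
end

section
/- Let θ : ℕ → (0,∞) be a sequence and suppose there exists ε ∈ (0,1) such that limsup_{n→∞} n^{−1} Σ_{i=1}^n exp(ε θ_i) < ∞. Let (Y_i)_{i≥1} be independent random variables on a common probability space with Y_i ~ Poisson(θ_i) for each i. Then there exists a constant C > 0 (depending on ε) such that P( max_{1≤i≤n} Y_i ≤ C log n ) → 1 as n → ∞. -/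
open MeasureTheory ProbabilityTheory Filter Real
open scoped Nat Topology

/-!
Chernoff's bound for a Poisson(θ) variable with tilt `c = log (1 + ε)` gives
`P(Y > t) ≤ exp (ε θ - c t)`. With `t = C log n` and `C = 2 / c` each term of the union bound over
`i < n` is `exp (ε θ_i) / n²`, and (A2) says `∑_{i<n} exp (ε θ_i) = O(n)`, so the probability
that the maximum exceeds `C log n` is `O(1/n)`.
-/

theorem hasSum_poisson_mul_exp (θ c t : ℝ) :
    HasSum (fun y : ℕ => exp (-θ) * θ ^ y / y ! * exp (c * (y - t)))
      (exp ((exp c - 1) * θ - c * t)) := by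
  have h := (NormedSpace.expSeries_div_hasSum_exp (exp c * θ)).mul_left (exp (-θ - c * t))
  rw [← exp_eq_exp_ℝ, ← exp_add,
    show -θ - c * t + exp c * θ = (exp c - 1) * θ - c * t by ring] at h
  refine h.congr_fun fun y => ?_
  rw [mul_sub, exp_sub, mul_comm c, exp_nat_mul, sub_eq_add_neg, exp_add, mul_pow]
  field_simp
  rw [mul_assoc, ← exp_add, add_neg_cancel, exp_zero, mul_one]

theorem measure_lt_le_exp_of_poisson {Ω : Type*} [MeasurableSpace Ω] (μ : Measure Ω) {X : Ω → ℕ}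
    {θ : ℝ} (hθ : 0 ≤ θ)
    (hX : ∀ y : ℕ, μ {ω | X ω = y} = ENNReal.ofReal (exp (-θ) * θ ^ y / y !))
    {c : ℝ} (hc : 0 ≤ c) (t : ℝ) :
    μ {ω | t < X ω} ≤ ENNReal.ofReal (exp ((exp c - 1) * θ - c * t)) := by
  have hcover : {ω | t < X ω} ⊆ ⋃ y : ℕ, {ω | X ω = y ∧ t < y} := fun ω hω =>
    Set.mem_iUnion.2 ⟨X ω, rfl, hω⟩
  have hterm (y : ℕ) : μ {ω | X ω = y ∧ t < y} ≤
      ENNReal.ofReal (exp (-θ) * θ ^ y / y ! * exp (c * (y - t))) := by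
    by_cases hy : t < y
    · calc μ {ω | X ω = y ∧ t < y} ≤ μ {ω | X ω = y} := measure_mono fun ω hω => hω.1
        _ ≤ _ := by
          rw [hX]
          exact ENNReal.ofReal_le_ofReal <| le_mul_of_one_le_right (by positivity)
            (one_le_exp (mul_nonneg hc (sub_nonneg.2 hy.le)))
    · simp [hy]
  have hsum := hasSum_poisson_mul_exp θ c t
  calc μ {ω | t < X ω} ≤ ∑' y : ℕ, μ {ω | X ω = y ∧ t < y} :=
        (measure_mono hcover).trans (measure_iUnion_le _)
    _ ≤ ∑' y : ℕ, ENNReal.ofReal (exp (-θ) * θ ^ y / y ! * exp (c * (y - t))) :=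
        ENNReal.tsum_le_tsum hterm
    _ = _ := by
        rw [← ENNReal.ofReal_tsum_of_nonneg (fun y => by positivity) hsum.summable,
          hsum.tsum_eq]

theorem measure_exists_lt_le_sum {Ω ι : Type*} [MeasurableSpace Ω] (μ : Measure Ω)
    (X : ι → Ω → ℝ) (s : Finset ι) (t : ℝ) :
    μ {ω | ∃ i ∈ s, t < X i ω} ≤ ∑ i ∈ s, μ {ω | t < X i ω} := by
  have hunion : {ω | ∃ i ∈ s, t < X i ω} = ⋃ i ∈ s, {ω | t < X i ω} := by ext; simp
  exact hunion ▸ measure_biUnion_finset_le s _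

theorem tendsto_measure_one_of_tendsto_measure_compl_zero {Ω ι : Type*} [MeasurableSpace Ω]
    (μ : Measure Ω) [IsProbabilityMeasure μ] {l : Filter ι} {s : ι → Set Ω}
    (h : Tendsto (fun i => μ (s i)ᶜ) l (𝓝 0)) : Tendsto (fun i => μ (s i)) l (𝓝 1) := by
  have hlow : Tendsto (fun i => 1 - μ (s i)ᶜ) l (𝓝 1) := by
    simpa using ENNReal.Tendsto.sub tendsto_const_nhds h (Or.inl ENNReal.one_ne_top)
  refine tendsto_of_tendsto_of_tendsto_of_le_of_le hlow tendsto_const_nhds (fun i => ?_)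
    (fun i => prob_le_one)
  rw [tsub_le_iff_right, ← measure_univ (μ := μ)]
  exact measure_univ_le_add_compl _

theorem tendsto_ofReal_inv_mul_of_limsup_lt_top {a : ℕ → ℝ}
    (h : limsup (fun n => ENNReal.ofReal (a n)) atTop < ⊤) :
    Tendsto (fun n : ℕ => ENNReal.ofReal ((n : ℝ)⁻¹ * a n)) atTop (𝓝 0) := by
  obtain ⟨L, hL, hLtop⟩ := exists_between h
  have hbound : ∀ᶠ n in atTop, a n ≤ L.toReal := (eventually_lt_of_limsup_lt hL).mono
    fun n hn => (ENNReal.ofReal_le_iff_le_toReal hLtop.ne).1 hn.le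
  have hlim : Tendsto (fun n : ℕ => ENNReal.ofReal ((n : ℝ)⁻¹ * L.toReal)) atTop (𝓝 0) := by
    simpa using ENNReal.tendsto_ofReal (tendsto_inv_atTop_nhds_zero_nat.mul_const L.toReal)
  refine tendsto_of_tendsto_of_tendsto_of_le_of_le' tendsto_const_nhds hlim
    (Eventually.of_forall fun n => zero_le) (hbound.mono fun n hn => ?_)
  exact ENNReal.ofReal_le_ofReal (mul_le_mul_of_nonneg_left hn (by positivity))

theorem poisson_max_le_log_lemmaA_general
    {Ω : Type*} [MeasurableSpace Ω] (P : Measure Ω) [IsProbabilityMeasure P]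
    (θ : ℕ → ℝ) (hθ : ∀ i, 0 < θ i)
    (ε : ℝ) (hε0 : 0 < ε)
    (hA2 : Filter.atTop.limsup (fun n : ℕ =>
        ENNReal.ofReal ((n : ℝ)⁻¹ * ∑ i ∈ Finset.range n, Real.exp (ε * θ i))) < ⊤)
    (Y : ℕ → Ω → ℕ)
    (hdist : ∀ i : ℕ, ∀ y : ℕ, P {ω | Y i ω = y}
      = ENNReal.ofReal (Real.exp (-θ i) * θ i ^ y / (Nat.factorial y : ℝ))) :
    ∃ C : ℝ, 0 < C ∧ Filter.Tendsto
      (fun n : ℕ => P {ω | ∀ i ∈ Finset.range n, (Y i ω : ℝ) ≤ C * Real.log n})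
      Filter.atTop (nhds 1) := by
  have hc : 0 < log (1 + ε) := log_pos (by linarith)
  refine ⟨2 / log (1 + ε), by positivity, tendsto_measure_one_of_tendsto_measure_compl_zero P ?_⟩
  refine tendsto_of_tendsto_of_tendsto_of_le_of_le' tendsto_const_nhds
    (tendsto_ofReal_inv_mul_of_limsup_lt_top hA2) (Eventually.of_forall fun n => zero_le)
    ((eventually_gt_atTop 0).mono fun n hn_pos => ?_)
  set t := 2 / log (1 + ε) * log n with ht
  have hn : (0 : ℝ) < n := Nat.cast_pos.2 hn_pos
  have hct : log (1 + ε) * t = log n + log n := by rw [ht]; field_simp; ring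
  have htail (i : ℕ) :
      P {ω | t < Y i ω} ≤ ENNReal.ofReal (exp (ε * θ i) * ((n : ℝ)⁻¹ * (n : ℝ)⁻¹)) := by
    convert measure_lt_le_exp_of_poisson P (hθ i).le (hdist i) hc.le t using 2
    rw [exp_log (by linarith), hct, add_sub_cancel_left, exp_sub, exp_add, exp_log hn]
    field_simp
  calc P {ω | ∀ i ∈ Finset.range n, (Y i ω : ℝ) ≤ t}ᶜ
      = P {ω | ∃ i ∈ Finset.range n, t < Y i ω} := by congr 1; ext; simp
    _ ≤ ∑ i ∈ Finset.range n, P {ω | t < Y i ω} :=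
        measure_exists_lt_le_sum P (fun i ω => (Y i ω : ℝ)) _ t
    _ ≤ ∑ i ∈ Finset.range n, ENNReal.ofReal (exp (ε * θ i) * ((n : ℝ)⁻¹ * (n : ℝ)⁻¹)) :=
        Finset.sum_le_sum fun i _ => htail i
    _ = ENNReal.ofReal ((n : ℝ)⁻¹ * ((n : ℝ)⁻¹ * ∑ i ∈ Finset.range n, exp (ε * θ i))) := by
        rw [← ENNReal.ofReal_sum_of_nonneg fun i _ => by positivity, ← Finset.sum_mul]
        ring_nf

/-- Lemma A of the paper: if `Y_i ~ Poisson(θ_i)` are independent and the rates satisfy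
Assumption (A2), `limsup_n n⁻¹ ∑_{i<n} exp(ε θ_i) < ∞` for some `ε ∈ (0,1)`, then there
is a constant `C > 0` with `P(max_{i<n} Y_i ≤ C log n) → 1` as `n → ∞`. -/
theorem poisson_max_le_log_lemmaA
    {Ω : Type*} [MeasurableSpace Ω] (P : Measure Ω) [IsProbabilityMeasure P]
    (θ : ℕ → ℝ) (hθ : ∀ i, 0 < θ i)
    (ε : ℝ) (hε0 : 0 < ε) (hε1 : ε < 1)
    (hA2 : Filter.atTop.limsup (fun n : ℕ =>
        ENNReal.ofReal ((n : ℝ)⁻¹ * ∑ i ∈ Finset.range n, Real.exp (ε * θ i))) < ⊤)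
    (Y : ℕ → Ω → ℕ) (hmeas : ∀ i, Measurable (Y i))
    (hindep : iIndepFun Y P)
    (hdist : ∀ i : ℕ, ∀ y : ℕ, P {ω | Y i ω = y}
      = ENNReal.ofReal (Real.exp (-θ i) * θ i ^ y / (Nat.factorial y : ℝ))) :
    ∃ C : ℝ, 0 < C ∧ Filter.Tendsto
      (fun n : ℕ => P {ω | ∀ i ∈ Finset.range n, (Y i ω : ℝ) ≤ C * Real.log n})
      Filter.atTop (nhds 1) :=
  poisson_max_le_log_lemmaA_general P θ hθ ε hε0 hA2 Y hdist
end

section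
/- Let n ≥ 2 be an integer, let θ_1,...,θ_n ∈ (0,∞) and K > 0 satisfy θ_i ≤ K log n for every i, and let s > 0 and ν > 0 satisfy s² ≥ 2(1+ν)(s+K). If Y_1,...,Y_n are random variables on a common probability space (not necessarily independent) with Y_i ~ Poisson(θ_i) for each i, then P( ∃ i ∈ {1,...,n} : Y_i ≥ θ_i + s log n ) ≤ n^{−ν}. -/
/-!
Chernoff's method: for every `l ≥ 0`, `P(Y ≥ a) ≤ E[exp (l (Y - a))] = exp (θ (eˡ - 1) - l a)`
when `Y ~ Poisson(θ)`. With `l = s / (s + K)` and `eˡ - 1 - l ≤ l² / (2 (1 - l))`, the exponent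
at `a = θ + s log n` is at most `-(s² / (2 (s + K))) log n ≤ -(1 + ν) log n` as soon as
`θ ≤ K log n`, so each coordinate exceeds its threshold with probability at most `n^(-(1+ν))`,
and a union bound over the `n` coordinates gives `n^(-ν)`.
-/

open MeasureTheory

lemma Real.exp_sub_one_sub_le {x : ℝ} (hx₀ : 0 ≤ x) (hx₁ : x < 1) :
    Real.exp x - 1 - x ≤ x ^ 2 / (2 * (1 - x)) := by
  have htail : HasSum (fun k : ℕ => x ^ (k + 2) / (k + 2).factorial) (Real.exp x - 1 - x) := by
    rw [Real.exp_eq_exp_ℝ, sub_sub]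
    convert! (hasSum_nat_add_iff' 2).2 (NormedSpace.expSeries_div_hasSum_exp x) using 2
    simp [Finset.sum_range_succ]
  have hgeom : HasSum (fun k : ℕ => x ^ 2 / 2 * x ^ k) (x ^ 2 / (2 * (1 - x))) := by
    convert! (hasSum_geometric_of_lt_one hx₀ hx₁).mul_left (x ^ 2 / 2) using 1
    field_simp
  refine hasSum_le (fun k => ?_) htail hgeom
  have hfac : (2 : ℝ) ≤ (k + 2).factorial := mod_cast Nat.factorial_le (by omega : 2 ≤ k + 2)
  calc x ^ (k + 2) / (k + 2).factorial ≤ x ^ (k + 2) / 2 := by gcongr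
    _ = x ^ 2 / 2 * x ^ k := by ring

lemma hasSum_poisson_mgf {θ : ℝ} (l : ℝ) :
    HasSum (fun y : ℕ => Real.exp (-θ) * θ ^ y / y.factorial * Real.exp (l * y))
      (Real.exp (θ * (Real.exp l - 1))) := by
  convert! (NormedSpace.expSeries_div_hasSum_exp (θ * Real.exp l)).mul_left (Real.exp (-θ))
    using 1
  · ext y
    rw [mul_pow, ← Real.exp_nat_mul, mul_comm (y : ℝ)]
    ring
  · rw [← Real.exp_eq_exp_ℝ, ← Real.exp_add]
    ring_nf

lemma measure_ge_le_exp_of_poisson {Ω : Type*} [MeasurableSpace Ω] (P : Measure Ω) {Y : Ω → ℕ}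
    {θ : ℝ} (hθ : 0 ≤ θ)
    (hY : ∀ y : ℕ, P {ω | Y ω = y}
      = ENNReal.ofReal (Real.exp (-θ) * θ ^ y / (Nat.factorial y : ℝ)))
    (a l : ℝ) (hl : 0 ≤ l) :
    P {ω | a ≤ (Y ω : ℝ)} ≤ ENNReal.ofReal (Real.exp (θ * (Real.exp l - 1) - l * a)) := by
  set q : ℕ → ℝ := fun y => Real.exp (-θ) * θ ^ y / y.factorial * Real.exp (l * y) *
    Real.exp (-(l * a))
  have hq : HasSum q (Real.exp (θ * (Real.exp l - 1) - l * a)) := by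
    rw [sub_eq_add_neg, Real.exp_add]
    exact (hasSum_poisson_mgf l).mul_right _
  -- Chernoff: on `{a ≤ y}` the weight `exp (l * (y - a))` is at least `1`.
  have hle : ∀ y : ℕ, a ≤ y → P {ω | Y ω = y} ≤ ENNReal.ofReal (q y) := by
    intro y hy
    rw [hY y]
    have hp : 0 ≤ Real.exp (-θ) * θ ^ y / y.factorial := by positivity
    refine ENNReal.ofReal_le_ofReal ?_
    rw [show q y = _ * _ * _ from rfl, mul_assoc]
    refine le_mul_of_one_le_right hp ?_
    rw [← Real.exp_add]
    exact Real.one_le_exp (by nlinarith)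
  calc P {ω | a ≤ (Y ω : ℝ)} = P (⋃ y ∈ {y : ℕ | a ≤ y}, Y ⁻¹' {y}) := by
        rw [Set.biUnion_preimage_singleton]; rfl
    _ ≤ ∑' y : {y : ℕ | a ≤ y}, P (Y ⁻¹' {(y : ℕ)}) :=
        measure_biUnion_le P (Set.to_countable _) _
    _ ≤ ∑' y : {y : ℕ | a ≤ y}, ENNReal.ofReal (q y) :=
        ENNReal.tsum_le_tsum fun y => hle y y.2
    _ ≤ ∑' y, ENNReal.ofReal (q y) :=
        ENNReal.tsum_comp_le_tsum_of_injective Subtype.val_injective _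
    _ = ENNReal.ofReal (Real.exp (θ * (Real.exp l - 1) - l * a)) := by
        rw [← ENNReal.ofReal_tsum_of_nonneg (fun y => by positivity) hq.summable, hq.tsum_eq]

lemma poisson_chernoff_exponent_le {θ K s L : ℝ} (hK : 0 < K) (hs : 0 ≤ s) (hL : 0 ≤ L)
    (hθ : θ ≤ K * L) :
    θ * (Real.exp (s / (s + K)) - 1) - s / (s + K) * (θ + s * L)
      ≤ -(s ^ 2 / (2 * (s + K))) * L := by
  have hsK : 0 < s + K := by linarith
  set l := s / (s + K) with hl
  have hl₀ : 0 ≤ l := by positivity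
  have hl₁ : l < 1 := (div_lt_one hsK).2 (by linarith)
  have he₀ : 0 ≤ Real.exp l - 1 - l := by linarith [Real.add_one_le_exp l]
  have hKe : K * (Real.exp l - 1 - l) ≤ s ^ 2 / (2 * (s + K)) :=
    calc K * (Real.exp l - 1 - l) ≤ K * (l ^ 2 / (2 * (1 - l))) := by
          gcongr; exact Real.exp_sub_one_sub_le hl₀ hl₁
      _ = s ^ 2 / (2 * (s + K)) := by
          rw [hl]; field_simp [hK.ne']; ring
  have hls : l * s = s ^ 2 / (s + K) := by rw [hl]; ring
  calc θ * (Real.exp l - 1) - l * (θ + s * L) = θ * (Real.exp l - 1 - l) - l * s * L := by ring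
    _ ≤ K * L * (Real.exp l - 1 - l) - l * s * L := by gcongr
    _ = (K * (Real.exp l - 1 - l) - l * s) * L := by ring
    _ ≤ (s ^ 2 / (2 * (s + K)) - s ^ 2 / (s + K)) * L := by rw [hls]; gcongr
    _ = -(s ^ 2 / (2 * (s + K))) * L := by field_simp; ring

theorem poisson_max_union_bound_general
    {Ω : Type*} [MeasurableSpace Ω] (P : Measure Ω)
    (n : ℕ) (hn : 2 ≤ n)
    (θ : ℕ → ℝ) (K : ℝ) (hK : 0 < K)
    (hθpos : ∀ i ∈ Finset.range n, 0 < θ i)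
    (hθle : ∀ i ∈ Finset.range n, θ i ≤ K * Real.log n)
    (s ν : ℝ) (hs : 0 < s) (hsν : 2 * (1 + ν) * (s + K) ≤ s ^ 2)
    (Y : ℕ → Ω → ℕ)
    (hdist : ∀ i ∈ Finset.range n, ∀ y : ℕ, P {ω | Y i ω = y}
      = ENNReal.ofReal (Real.exp (-θ i) * θ i ^ y / (Nat.factorial y : ℝ))) :
    P {ω | ∃ i ∈ Finset.range n, θ i + s * Real.log n ≤ (Y i ω : ℝ)}
      ≤ ENNReal.ofReal ((n : ℝ) ^ (-ν)) := by
  have hn₀ : (0 : ℝ) < n := by positivity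
  have hL : 0 ≤ Real.log n := Real.log_nonneg (by exact_mod_cast (by omega : 1 ≤ n))
  have hν : 1 + ν ≤ s ^ 2 / (2 * (s + K)) := by
    rw [le_div_iff₀ (by positivity)]; linarith
  have htail : ∀ i ∈ Finset.range n,
      P {ω | θ i + s * Real.log n ≤ (Y i ω : ℝ)} ≤ ENNReal.ofReal ((n : ℝ) ^ (-(1 + ν))) := by
    intro i hi
    refine (measure_ge_le_exp_of_poisson P (hθpos i hi).le (hdist i hi) _ (s / (s + K))
      (by positivity)).trans ?_
    rw [Real.rpow_def_of_pos hn₀]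
    gcongr
    calc _ ≤ -(s ^ 2 / (2 * (s + K))) * Real.log n :=
          poisson_chernoff_exponent_le hK hs.le hL (hθle i hi)
      _ ≤ Real.log n * -(1 + ν) := by nlinarith
  calc P {ω | ∃ i ∈ Finset.range n, θ i + s * Real.log n ≤ (Y i ω : ℝ)}
      = P (⋃ i ∈ Finset.range n, {ω | θ i + s * Real.log n ≤ (Y i ω : ℝ)}) := by
        congr 1; ext; simp
    _ ≤ ∑ i ∈ Finset.range n, P {ω | θ i + s * Real.log n ≤ (Y i ω : ℝ)} :=
        measure_biUnion_finset_le _ _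
    _ ≤ n * ENNReal.ofReal ((n : ℝ) ^ (-(1 + ν))) := by
        simpa using Finset.sum_le_card_nsmul _ _ _ htail
    _ = ENNReal.ofReal ((n : ℝ) ^ (-ν)) := by
        rw [← ENNReal.ofReal_natCast, ← ENNReal.ofReal_mul hn₀.le,
          show -ν = 1 + -(1 + ν) by ring, Real.rpow_add hn₀, Real.rpow_one]

/-- The quantitative finite-sample estimate inside the proof of Lemma A of the paper: if
`Y_i ~ Poisson(θ_i)` (not necessarily independent) with `θ_i ≤ K log n` for `i < n`, and
`s, ν > 0` satisfy `s² ≥ 2(1+ν)(s+K)`, then the probability that some `Y_i` exceeds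
`θ_i + s log n` is at most `n^{-ν}`. -/
theorem poisson_max_union_bound
    {Ω : Type*} [MeasurableSpace Ω] (P : Measure Ω) [IsProbabilityMeasure P]
    (n : ℕ) (hn : 2 ≤ n)
    (θ : ℕ → ℝ) (K : ℝ) (hK : 0 < K)
    (hθpos : ∀ i ∈ Finset.range n, 0 < θ i)
    (hθle : ∀ i ∈ Finset.range n, θ i ≤ K * Real.log n)
    (s ν : ℝ) (hs : 0 < s) (hν : 0 < ν) (hsν : 2 * (1 + ν) * (s + K) ≤ s ^ 2)
    (Y : ℕ → Ω → ℕ) (hmeas : ∀ i, Measurable (Y i))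
    (hdist : ∀ i ∈ Finset.range n, ∀ y : ℕ, P {ω | Y i ω = y}
      = ENNReal.ofReal (Real.exp (-θ i) * θ i ^ y / (Nat.factorial y : ℝ))) :
    P {ω | ∃ i ∈ Finset.range n, θ i + s * Real.log n ≤ (Y i ω : ℝ)}
      ≤ ENNReal.ofReal ((n : ℝ) ^ (-ν)) :=
  poisson_max_union_bound_general P n hn θ K hK hθpos hθle s ν hs hsν Y hdist
end

section
/- Let X be a real normed vector space, S ⊆ X a set, f, g : X → ℝ functions, and c > 0, L ≥ 0 constants. Suppose (i) x₀ ∈ S satisfies f(x) − f(x₀) ≥ c·‖x − x₀‖² for all x ∈ S (quadratic growth of f at x₀ over S); (ii) x₁ ∈ S satisfies g(x₁) ≤ g(x₀); and (iii) the difference f − g is Lipschitz on S with constant L, i.e. |(f(u) − g(u)) − (f(v) − g(v))| ≤ L·‖u − v‖ for all u, v ∈ S. Then ‖x₁ − x₀‖ ≤ L/c. -/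
/-!
Optimality of `x₁` for `g` transfers to `f` up to the Lipschitz perturbation `f - g`:
`f x₁ - f x₀ ≤ L r` with `r = ‖x₁ - x₀‖`, while quadratic growth gives `c r² ≤ f x₁ - f x₀`.
Hence `c r² ≤ L r`, i.e. `r ≤ L / c`.
-/

lemma le_div_of_mul_sq_le_mul {c L r : ℝ} (hc : 0 < c) (hL : 0 ≤ L) (hr : 0 ≤ r)
    (h : c * r ^ 2 ≤ L * r) : r ≤ L / c := by
  rcases hr.eq_or_lt with rfl | hr
  · positivity
  · refine (le_div_iff₀' hc).2 (le_of_mul_le_mul_right ?_ hr)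
    linarith

theorem quadratic_growth_lipschitz_stability_general
    {X : Type*} [NormedAddCommGroup X]
    (S : Set X) (f g : X → ℝ) (c L : ℝ) (hc : 0 < c) (hL : 0 ≤ L)
    (x₀ x₁ : X) (hx₀ : x₀ ∈ S) (hx₁ : x₁ ∈ S)
    (hgrow : ∀ x ∈ S, c * ‖x - x₀‖ ^ 2 ≤ f x - f x₀)
    (hmin : g x₁ ≤ g x₀)
    (hlip : ∀ u ∈ S, ∀ v ∈ S, |(f u - g u) - (f v - g v)| ≤ L * ‖u - v‖) :
    ‖x₁ - x₀‖ ≤ L / c := by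
  have hgap : f x₁ - f x₀ ≤ L * ‖x₁ - x₀‖ := by
    have := (le_abs_self _).trans (hlip x₁ hx₁ x₀ hx₀)
    linarith
  exact le_div_of_mul_sq_le_mul hc hL (norm_nonneg _) ((hgrow x₁ hx₁).trans hgap)

/-- Abstract stability principle (Lemma B of the paper): quadratic growth of `f` at the
minimizer `x₀` over `S`, near-optimality of `x₁` for `g`, and Lipschitz continuity of the
difference `f - g` on `S` force `x₁` to be within `L / c` of `x₀`. -/
theorem quadratic_growth_lipschitz_stability
    {X : Type*} [NormedAddCommGroup X] [NormedSpace ℝ X]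
    (S : Set X) (f g : X → ℝ) (c L : ℝ) (hc : 0 < c) (hL : 0 ≤ L)
    (x₀ x₁ : X) (hx₀ : x₀ ∈ S) (hx₁ : x₁ ∈ S)
    (hgrow : ∀ x ∈ S, c * ‖x - x₀‖ ^ 2 ≤ f x - f x₀)
    (hmin : g x₁ ≤ g x₀)
    (hlip : ∀ u ∈ S, ∀ v ∈ S, |(f u - g u) - (f v - g v)| ≤ L * ‖u - v‖) :
    ‖x₁ - x₀‖ ≤ L / c :=
  quadratic_growth_lipschitz_stability_general S f g c L hc hL x₀ x₁ hx₀ hx₁ hgrow hmin hlip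
end
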